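/- If a finite strategic game H can be solved by an iterated elimination of weakly dominated strategies (i.e., some game H^k obtained from H by an IEWDS is trivial), then every joint strategy of that trivial game H^k is a Nash equilibrium of H. -/
import Mathlib


/-- A joint strategy is a Nash equilibrium if no player can profit by a unilateral deviation. -/
def NashEq {n : ℕ} (S : Fin n → Type) (p : ∀ _ : Fin n, (∀ j, S j) → ℝ) (s : ∀ j, S j) : Prop :=
  ∀ (i : Fin n) (ti : S i), p i s ≥ p i (Function.update s i ti)

/-- `t` weakly dominates `s` (strategies of player `i`) in the game restricted to the
strategy sets `A j`. -/
def WDomIn {n : ℕ} (S : Fin n → Type)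
    (p : ∀ _ : Fin n, (∀ j, S j) → ℝ) (A : ∀ j, Set (S j)) (i : Fin n) (t s : S i) : Prop :=
  (∀ σ : ∀ j, S j, (∀ j, j ≠ i → σ j ∈ A j) →
      p i (Function.update σ i t) ≥ p i (Function.update σ i s)) ∧
  (∃ σ : ∀ j, S j, (∀ j, j ≠ i → σ j ∈ A j) ∧
      p i (Function.update σ i t) > p i (Function.update σ i s))

/-- `B` is obtained from `A` by one round of elimination of some (not necessarily all)
strategies that are weakly dominated in the game restricted to `A`. -/
def ElimStep {n : ℕ} (S : Fin n → Type) (p : ∀ _ : Fin n, (∀ j, S j) → ℝ)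
    (A B : ∀ j, Set (S j)) : Prop :=
  (∀ j, B j ⊆ A j) ∧
  (∀ (j : Fin n), ∀ s ∈ A j, s ∉ B j → ∃ t ∈ A j, WDomIn S p A j t s)

/-- If a finite strategic game `H` can be solved by an IEWDS, i.e. some `H^k` obtained from
`H` by iterated elimination of weakly dominated strategies is a trivial game, then every
joint strategy of `H^k` is a Nash equilibrium of `H`. -/
theorem iewds_solvable_nash {n : ℕ} (S : Fin n → Type)
    [∀ i, Fintype (S i)] [∀ i, Nonempty (S i)]
    (p : ∀ _ : Fin n, (∀ j, S j) → ℝ)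
    (A : ℕ → ∀ j, Set (S j)) (hA0 : A 0 = fun _ => Set.univ)
    (k : ℕ) (hstep : ∀ m < k, ElimStep S p (A m) (A (m + 1)))
    (htrivial : ∀ s t : ∀ j, S j, (∀ j, s j ∈ A k j) → (∀ j, t j ∈ A k j) →
      ∀ i, p i s = p i t) :
    ∀ s : ∀ j, S j, (∀ j, s j ∈ A k j) → NashEq S p s := by
  classical
  intro s hs i ti
  -- A k ⊆ A m for m ≤ k
  have H : ∀ d m, m + d = k → ∀ j, ∀ x, x ∈ A k j → x ∈ A m j := by
    intro d
    induction d with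
    | zero =>
      intro m hm j x hx
      have : m = k := by omega
      rw [this]; exact hx
    | succ d ih =>
      intro m hm j x hx
      exact (hstep m (by omega)).1 j (ih (m + 1) (by omega) j x hx)
  -- main claim: any strategy in A m can be replaced by one in A k with at least
  -- the same payoff against s
  have main : ∀ d m, m + d = k → ∀ t, t ∈ A m i →
      ∃ t', t' ∈ A k i ∧
        p i (Function.update s i t') ≥ p i (Function.update s i t) := by
    intro d
    induction d with
    | zero =>
      intro m hm t ht
      have : m = k := by omega
      exact ⟨t, by rw [← this]; exact ht, le_refl _⟩
    | succ d ih =>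
      intro m hm t ht
      -- the finset of profiles whose non-i components lie in A m
      set Sigs : Finset (∀ j, S j) :=
        Finset.univ.filter (fun σ : ∀ j, S j => ∀ j, j ≠ i → σ j ∈ A m j) with hSigs
      set V : S i → ℝ := fun u => ∑ σ ∈ Sigs, p i (Function.update σ i u) with hV
      -- candidates: strategies in A m at least as good as t against s
      set T : Finset (S i) :=
        Finset.univ.filter (fun u => u ∈ A m i ∧
          p i (Function.update s i u) ≥ p i (Function.update s i t)) with hT
      have htT : t ∈ T := by
        simp only [hT, Finset.mem_filter, Finset.mem_univ, true_and]
        exact ⟨ht, le_refl _⟩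
      obtain ⟨t₀, ht₀T, ht₀max⟩ := T.exists_max_image V ⟨t, htT⟩
      have ht₀ : t₀ ∈ A m i ∧
          p i (Function.update s i t₀) ≥ p i (Function.update s i t) := by
        simpa only [hT, Finset.mem_filter, Finset.mem_univ, true_and] using ht₀T
      -- s's components lie in A m
      have hsAm : ∀ j, j ≠ i → s j ∈ A m j := fun j _ => H (d + 1) m hm j (s j) (hs j)
      -- t₀ survives to A (m+1)
      have ht₀1 : t₀ ∈ A (m + 1) i := by
        by_contra hne
        obtain ⟨t'', ht''m, hdom⟩ := (hstep m (by omega)).2 i t₀ ht₀.1 hne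
        have ht''T : t'' ∈ T := by
          simp only [hT, Finset.mem_filter, Finset.mem_univ, true_and]
          exact ⟨ht''m, le_trans ht₀.2 (hdom.1 s hsAm)⟩
        have hlt : V t₀ < V t'' := by
          obtain ⟨σ₀, hσ₀, hstrict⟩ := hdom.2
          apply Finset.sum_lt_sum
          · intro σ hσ
            have hσ' : ∀ j, j ≠ i → σ j ∈ A m j := by
              simpa only [hSigs, Finset.mem_filter, Finset.mem_univ, true_and] using hσ
            exact hdom.1 σ hσ'
          · refine ⟨σ₀, ?_, hstrict⟩
            simp only [hSigs, Finset.mem_filter, Finset.mem_univ, true_and]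
            exact hσ₀
        exact absurd (ht₀max t'' ht''T) (not_le.mpr hlt)
      obtain ⟨t', ht'k, ht'p⟩ := ih (m + 1) (by omega) t₀ ht₀1
      exact ⟨t', ht'k, le_trans ht₀.2 ht'p⟩
  -- apply the claim to ti ∈ A 0 i
  have hti0 : ti ∈ A 0 i := by rw [hA0]; trivial
  obtain ⟨t', ht'k, ht'p⟩ := main k 0 (by omega) ti hti0
  have hmem : ∀ j, Function.update s i t' j ∈ A k j := by
    intro j
    by_cases hji : j = i
    · subst hji; rw [Function.update_self]; exact ht'k
    · rw [Function.update_of_ne hji]; exact hs j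
  have heq := htrivial s (Function.update s i t') hs hmem i
  calc p i s = p i (Function.update s i t') := heq
    _ ≥ p i (Function.update s i ti) := ht'p
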